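/- arXiv:2001.08426 — 4 statements merged into one kernel-verified Lean document; each statement's English description precedes it below -/
import Mathlib

section
/- Let A_C(Λ) be a code algebra, α ∈ C*, and suppose a_α := a_{i,α} and c_α := c_{i,α} are independent of i ∈ supp(α), with a_α|α| invertible in F. Set λ = 1/(2a_α|α|), and let μ ∈ F satisfy μ² = (λ − λ²)/c_α. Then both e_{α,+} = λt_α + μe^α and e_{α,−} = λt_α − μe^α are idempotents of A_C(Λ), where t_α = Σ_{i∈supp(α)} tᵢ. -/
/-
Put `T = t_α` and `E = e^α`. The defining relations give `T² = T`, `T E = a_α |α| E` and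
`E² = c_α T`, so `(λT ± μE)² = (λ² + μ²c_α) T ± 2λμ a_α|α| E`. The choice of `μ` makes the first
coefficient `λ`, and the choice of `λ` makes `2λ a_α|α| = 1`, so the second is `±μ`.
-/

open Finset in
/-- The code algebra `A_C(Λ)` of a binary linear code `C`, presented as a commutative
nonassociative `F`-algebra `A` with a distinguished basis of toral elements `t i` and
codeword elements `e α` (for `α ∈ C* = C \ {0, 1}`), structure parameters
`pa i α = a_{i,α}`, `pb α β = b_{α,β}`, `pc i α = c_{i,α}`, and the defining
multiplication rules. -/
structure CodeAlgebra (F : Type*) [Field F] (ι : Type*) [Fintype ι] [DecidableEq ι]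
    (C : Submodule (ZMod 2) (ι → ZMod 2))
    (A : Type*) [NonUnitalNonAssocCommRing A] [Module F A] where
  t : ι → A
  e : (ι → ZMod 2) → A
  pa : ι → (ι → ZMod 2) → F
  pb : (ι → ZMod 2) → (ι → ZMod 2) → F
  pc : ι → (ι → ZMod 2) → F
  indep : LinearIndependent F
    (Sum.elim t (fun β : {β : ι → ZMod 2 // β ∈ C ∧ β ≠ 0 ∧ β ≠ 1} => e β.1))
  span_top : Submodule.span F
    (Set.range t ∪ e '' {β | β ∈ C ∧ β ≠ 0 ∧ β ≠ 1}) = ⊤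
  mul_tt : ∀ i j, t i * t j = if i = j then t i else 0
  mul_te : ∀ i α, α ∈ C → α ≠ 0 → α ≠ 1 →
    t i * e α = if α i = 1 then pa i α • e α else 0
  mul_ee : ∀ α β, α ∈ C → β ∈ C → α ≠ 0 → α ≠ 1 → β ≠ 0 → β ≠ 1 →
    β ≠ α → α + β ≠ 1 → e α * e β = pb α β • e (α + β)
  mul_ee_self : ∀ α, α ∈ C → α ≠ 0 → α ≠ 1 →
    e α * e α = ∑ i ∈ univ.filter (fun i => α i = 1), pc i α • t i
  mul_ee_compl : ∀ α β, α ∈ C → β ∈ C → α ≠ 0 → α ≠ 1 → β ≠ 0 → β ≠ 1 →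
    α + β = 1 → e α * e β = 0

open Finset

theorem isIdempotentElem_smul_add_smul {F A : Type*} [Field F] [NonUnitalNonAssocCommRing A]
    [Module F A] [SMulCommClass F A A] [IsScalarTower F A A] {T E : A} {s c lam m : F}
    (hTT : T * T = T) (hTE : T * E = s • E) (hEE : E * E = c • T)
    (hm : m ^ 2 * c = lam - lam ^ 2) (hlam : 2 * s * lam = 1) :
    IsIdempotentElem (lam • T + m • E) := by
  have hET : E * T = s • E := by rw [mul_comm, hTE]
  unfold IsIdempotentElem
  rw [add_mul, mul_add, mul_add, smul_mul_smul_comm, smul_mul_smul_comm, smul_mul_smul_comm,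
    smul_mul_smul_comm, hTT, hTE, hET, hEE]
  match_scalars
  · linear_combination hm
  · linear_combination m * hlam

namespace CodeAlgebra

variable {F : Type*} [Field F] {ι : Type*} [Fintype ι] [DecidableEq ι]
  {C : Submodule (ZMod 2) (ι → ZMod 2)} {A : Type*} [NonUnitalNonAssocCommRing A] [Module F A]
  (CA : CodeAlgebra F ι C A)

theorem sum_t_mul_sum_t (S : Finset ι) :
    (∑ i ∈ S, CA.t i) * (∑ i ∈ S, CA.t i) = ∑ i ∈ S, CA.t i := by
  rw [sum_mul_sum]
  refine sum_congr rfl fun i hi => ?_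
  simp only [CA.mul_tt, sum_ite_eq, if_pos hi]

variable {α : ι → ZMod 2} (hαC : α ∈ C) (hα0 : α ≠ 0) (hα1 : α ≠ 1)
include hαC hα0 hα1

theorem sum_t_mul_e_of_pa_eq {a0 : F} (ha : ∀ i, α i = 1 → CA.pa i α = a0) :
    (∑ i ∈ univ.filter fun i => α i = 1, CA.t i) * CA.e α =
      (((univ.filter fun i => α i = 1).card : F) * a0) • CA.e α := by
  rw [sum_mul, mul_smul, Nat.cast_smul_eq_nsmul, ← sum_const]
  refine sum_congr rfl fun i hi => ?_
  have hi1 : α i = 1 := (mem_filter.mp hi).2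
  rw [CA.mul_te i α hαC hα0 hα1, if_pos hi1, ha i hi1]

theorem e_mul_e_self_of_pc_eq {c0 : F} (hc : ∀ i, α i = 1 → CA.pc i α = c0) :
    CA.e α * CA.e α = c0 • ∑ i ∈ univ.filter fun i => α i = 1, CA.t i := by
  rw [CA.mul_ee_self α hαC hα0 hα1, smul_sum]
  exact sum_congr rfl fun i hi => by rw [hc i (mem_filter.mp hi).2]

end CodeAlgebra

open Finset in
/-- The small idempotents `e_{α,±} = λ t_α ± μ e^α` are idempotents of the code
algebra, where `λ = 1/(2 a_α |α|)` and `μ² = (λ − λ²)/c_α`. -/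
theorem small_idempotents_are_idempotent
    (F : Type*) [Field F] (hch : (2 : F) ≠ 0)
    (ι : Type*) [Fintype ι] [DecidableEq ι]
    (C : Submodule (ZMod 2) (ι → ZMod 2))
    (A : Type*) [NonUnitalNonAssocCommRing A] [Module F A]
    [SMulCommClass F A A] [IsScalarTower F A A]
    (CA : CodeAlgebra F ι C A)
    (α : ι → ZMod 2) (hαC : α ∈ C) (hα0 : α ≠ 0) (hα1 : α ≠ 1)
    (a0 c0 lam mu : F)
    (ha : ∀ i, α i = 1 → CA.pa i α = a0)
    (hc : ∀ i, α i = 1 → CA.pc i α = c0)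
    (hc0 : c0 ≠ 0)
    (haw : a0 * ((univ.filter fun i => α i = 1).card : F) ≠ 0)
    (hlam : lam = (2 * a0 * ((univ.filter fun i => α i = 1).card : F))⁻¹)
    (hmu : mu ^ 2 = (lam - lam ^ 2) / c0) :
    (lam • (∑ i ∈ univ.filter fun i => α i = 1, CA.t i) + mu • CA.e α) *
      (lam • (∑ i ∈ univ.filter fun i => α i = 1, CA.t i) + mu • CA.e α) =
      lam • (∑ i ∈ univ.filter fun i => α i = 1, CA.t i) + mu • CA.e α ∧
    (lam • (∑ i ∈ univ.filter fun i => α i = 1, CA.t i) - mu • CA.e α) *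
      (lam • (∑ i ∈ univ.filter fun i => α i = 1, CA.t i) - mu • CA.e α) =
      lam • (∑ i ∈ univ.filter fun i => α i = 1, CA.t i) - mu • CA.e α := by
  have hTE := CA.sum_t_mul_e_of_pa_eq hαC hα0 hα1 ha
  have hEE := CA.e_mul_e_self_of_pc_eq hαC hα0 hα1 hc
  have hmu' : mu ^ 2 * c0 = lam - lam ^ 2 := by rw [hmu, div_mul_cancel₀ _ hc0]
  have hlam' : 2 * (((univ.filter fun i => α i = 1).card : F) * a0) * lam = 1 := by
    rw [hlam, mul_comm (_ : F) a0, ← mul_assoc, mul_inv_cancel₀]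
    exact mul_assoc 2 a0 _ ▸ mul_ne_zero hch haw
  have hidem (m : F) (hm : m ^ 2 * c0 = lam - lam ^ 2) :=
    isIdempotentElem_smul_add_smul (CA.sum_t_mul_sum_t _) hTE hEE hm hlam'
  refine ⟨hidem mu hmu', ?_⟩
  simpa only [IsIdempotentElem, neg_smul, ← sub_eq_add_neg] using hidem (-mu) (by rwa [neg_sq])
end

section
/- With notation as above (λ = 1/(2a_α|α|), μ² = (λ−λ²)/c_α), the product of the two small idempotents satisfies (λt_α + μe^α)(λt_α − μe^α) = λ(2λ − 1)t_α. In particular the two small idempotents e_{α,±} are orthogonal if and only if λ = 1/2 (equivalently a_α = 1/(2|α|)) or λ = 0. -/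
theorem LinearIndependent.sum_ne_zero {R M ι : Type*} [Ring R] [Nontrivial R] [AddCommGroup M]
    [Module R M] {v : ι → M} (hv : LinearIndependent R v) {s : Finset ι} (hs : s.Nonempty) :
    ∑ i ∈ s, v i ≠ 0 := by
  intro hsum
  obtain ⟨i, hi⟩ := hs
  exact one_ne_zero <| linearIndependent_iff'.mp hv s (fun _ => 1) (by simpa using hsum) i hi

theorem smul_add_smul_mul_smul_sub_smul {R A : Type*} [CommSemiring R]
    [NonUnitalNonAssocCommRing A] [Module R A] [SMulCommClass R A A] [IsScalarTower R A A]
    (l m : R) (x y : A) :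
    (l • x + m • y) * (l • x - m • y) = (l * l) • (x * x) - (m * m) • (y * y) := by
  rw [← mul_self_sub_mul_self, smul_mul_smul_comm, smul_mul_smul_comm]

theorem mul_two_mul_sub_one_eq_zero_iff {F : Type*} [Field F] (h2 : (2 : F) ≠ 0) (x : F) :
    x * (2 * x - 1) = 0 ↔ x = 1 / 2 ∨ x = 0 := by
  rw [mul_eq_zero, sub_eq_zero, eq_div_iff h2, mul_comm, or_comm]

theorem Finset.filter_eq_one_nonempty_of_ne_zero {ι : Type*} [Fintype ι] {α : ι → ZMod 2}
    (hα : α ≠ 0) : (univ.filter fun i => α i = 1).Nonempty := by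
  obtain ⟨i, hi⟩ := Function.ne_iff.mp hα
  exact ⟨i, mem_filter.mpr ⟨mem_univ i, Fin.eq_one_of_ne_zero (α i) hi⟩⟩

namespace CodeAlgebra

open Finset

variable {F : Type*} [Field F] {ι : Type*} [Fintype ι] [DecidableEq ι]
  {C : Submodule (ZMod 2) (ι → ZMod 2)} {A : Type*} [NonUnitalNonAssocCommRing A] [Module F A]
  (CA : CodeAlgebra F ι C A)

theorem linearIndependent_t : LinearIndependent F CA.t :=
  CA.indep.comp Sum.inl Sum.inl_injective

theorem sum_t_mul_self (s : Finset ι) :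
    (∑ i ∈ s, CA.t i) * ∑ i ∈ s, CA.t i = ∑ i ∈ s, CA.t i := by
  rw [sum_mul_sum]
  refine sum_congr rfl fun i hi => ?_
  simp_rw [CA.mul_tt, sum_ite_eq, if_pos hi]

theorem e_mul_self_of_pc_eq {α : ι → ZMod 2} (hαC : α ∈ C) (hα0 : α ≠ 0) (hα1 : α ≠ 1) {c : F}
    (hc : ∀ i, α i = 1 → CA.pc i α = c) :
    CA.e α * CA.e α = c • ∑ i ∈ univ.filter fun i => α i = 1, CA.t i := by
  rw [CA.mul_ee_self α hαC hα0 hα1, smul_sum]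
  exact sum_congr rfl fun i hi => by rw [hc i (mem_filter.mp hi).2]

end CodeAlgebra

open Finset in
theorem small_idempotents_product_general
    (F : Type*) [Field F] (hch : (2 : F) ≠ 0)
    (ι : Type*) [Fintype ι] [DecidableEq ι]
    (C : Submodule (ZMod 2) (ι → ZMod 2))
    (A : Type*) [NonUnitalNonAssocCommRing A] [Module F A]
    [SMulCommClass F A A] [IsScalarTower F A A]
    (CA : CodeAlgebra F ι C A)
    (α : ι → ZMod 2) (hαC : α ∈ C) (hα0 : α ≠ 0) (hα1 : α ≠ 1)
    (c0 lam mu : F)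
    (hc : ∀ i, α i = 1 → CA.pc i α = c0)
    (hc0 : c0 ≠ 0)
    (hmu : mu ^ 2 = (lam - lam ^ 2) / c0) :
    (lam • (∑ i ∈ univ.filter fun i => α i = 1, CA.t i) + mu • CA.e α) *
      (lam • (∑ i ∈ univ.filter fun i => α i = 1, CA.t i) - mu • CA.e α) =
      (lam * (2 * lam - 1)) • (∑ i ∈ univ.filter fun i => α i = 1, CA.t i) ∧
    ((lam • (∑ i ∈ univ.filter fun i => α i = 1, CA.t i) + mu • CA.e α) *
      (lam • (∑ i ∈ univ.filter fun i => α i = 1, CA.t i) - mu • CA.e α) = 0 ↔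
      lam = 1 / 2 ∨ lam = 0) := by
  set tα := ∑ i ∈ univ.filter (fun i => α i = 1), CA.t i
  have hprod :
      (lam • tα + mu • CA.e α) * (lam • tα - mu • CA.e α) = (lam * (2 * lam - 1)) • tα := by
    rw [smul_add_smul_mul_smul_sub_smul, CA.sum_t_mul_self,
      CA.e_mul_self_of_pc_eq hαC hα0 hα1 hc, smul_smul, ← sub_smul, ← sq mu, hmu,
      div_mul_cancel₀ _ hc0]
    congr 1
    ring
  have htα : tα ≠ 0 :=
    CA.linearIndependent_t.sum_ne_zero (filter_eq_one_nonempty_of_ne_zero hα0)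
  refine ⟨hprod, ?_⟩
  rw [hprod, smul_eq_zero_iff_left htα, mul_two_mul_sub_one_eq_zero_iff hch]

open Finset in
/-- The product of the two small idempotents: `e_{α,+} e_{α,−} = λ(2λ−1) t_α`; in
particular they are orthogonal iff `λ = 1/2` or `λ = 0`. -/
theorem small_idempotents_product
    (F : Type*) [Field F] (hch : (2 : F) ≠ 0)
    (ι : Type*) [Fintype ι] [DecidableEq ι]
    (C : Submodule (ZMod 2) (ι → ZMod 2))
    (A : Type*) [NonUnitalNonAssocCommRing A] [Module F A]
    [SMulCommClass F A A] [IsScalarTower F A A]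
    (CA : CodeAlgebra F ι C A)
    (α : ι → ZMod 2) (hαC : α ∈ C) (hα0 : α ≠ 0) (hα1 : α ≠ 1)
    (a0 c0 lam mu : F)
    (ha : ∀ i, α i = 1 → CA.pa i α = a0)
    (hc : ∀ i, α i = 1 → CA.pc i α = c0)
    (hc0 : c0 ≠ 0)
    (haw : a0 * ((univ.filter fun i => α i = 1).card : F) ≠ 0)
    (hlam : lam = (2 * a0 * ((univ.filter fun i => α i = 1).card : F))⁻¹)
    (hmu : mu ^ 2 = (lam - lam ^ 2) / c0) :
    (lam • (∑ i ∈ univ.filter fun i => α i = 1, CA.t i) + mu • CA.e α) *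
      (lam • (∑ i ∈ univ.filter fun i => α i = 1, CA.t i) - mu • CA.e α) =
      (lam * (2 * lam - 1)) • (∑ i ∈ univ.filter fun i => α i = 1, CA.t i) ∧
    ((lam • (∑ i ∈ univ.filter fun i => α i = 1, CA.t i) + mu • CA.e α) *
      (lam • (∑ i ∈ univ.filter fun i => α i = 1, CA.t i) - mu • CA.e α) = 0 ↔
      lam = 1 / 2 ∨ lam = 0) :=
  small_idempotents_product_general F hch ι C A CA α hαC hα0 hα1 c0 lam mu hc hc0 hmu
end

section
/- In the code algebra for C = F₂² with a = −1 (so λ = −1/2), and μᵢ² = −3/(4c_{αᵢ}) with c_{αᵢ} ≠ 0, each subalgebra Aᵢ = ⟨tᵢ, e^{αᵢ}⟩ contains exactly three nonzero idempotents: tᵢ and the two small idempotents e_{i,±} = −(1/2)tᵢ ± μᵢe^{αᵢ}; moreover the Miyamoto involution τ_{i,±} (fixing e_{i,±}, negating 2μᵢc_{αᵢ}tᵢ − e^{αᵢ}) maps tᵢ to e_{i,∓}. -/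
/-- The weight-one vector with support `{i}`. -/
def sngl {ι : Type*} [DecidableEq ι] (i : ι) : ι → ZMod 2 :=
  fun j => if j = i then 1 else 0

/-!
On `⟨t, e⟩` with `t² = t`, `te = -e`, `e² = c t` one has
`(a t + b e)² = (a² + b² c) t - 2ab e`, so idempotency of `a t + b e` means `a² + b² c = a` and
`b (2a + 1) = 0`. Either `b = 0` and `a = 1`, or `a = -1/2` and `4 b² c = -3`, i.e. `b = ±μ`.
For the Miyamoto involution, `t = -½ e₊ - (μ/2) v` with `v = 2μc t - e` (this uses
`4 μ² c = -3`), and `τ` fixes `e₊` and negates `v`, so `τ t = -½ e₊ + (μ/2) v = e₋`.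
-/

section SmallIdempotents

variable {F A : Type*} [Field F] [NonUnitalNonAssocCommRing A] [Module F A]
  [SMulCommClass F A A] [IsScalarTower F A A] {t e : A} {c : F}

theorem smul_add_smul_mul_self (htt : t * t = t) (hte : t * e = -e) (hee : e * e = c • t)
    (a b : F) :
    (a • t + b • e) * (a • t + b • e) = (a ^ 2 + b ^ 2 * c) • t + (-(2 * a * b)) • e := by
  rw [add_mul, mul_add, mul_add, smul_mul_assoc, smul_mul_assoc, smul_mul_assoc,
    smul_mul_assoc, mul_smul_comm, mul_smul_comm, mul_smul_comm, mul_smul_comm,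
    htt, hte, hee, mul_comm e t, hte]
  module

theorem isIdempotentElem_neg_half_smul_add_smul (htt : t * t = t) (hte : t * e = -e)
    (hee : e * e = c • t) (h2 : (2 : F) ≠ 0) {b : F} (hb : 4 * (b ^ 2 * c) = -3) :
    IsIdempotentElem ((-(1 / 2 : F)) • t + b • e) := by
  rw [IsIdempotentElem, smul_add_smul_mul_self htt hte hee]
  match_scalars
  · field_simp
    linear_combination hb
  · field_simp

theorem coeffs_of_isIdempotentElem_smul_add_smul (htt : t * t = t) (hte : t * e = -e)
    (hee : e * e = c • t) (hind : LinearIndependent F ![t, e]) (h2 : (2 : F) ≠ 0) {a b : F}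
    (hx : IsIdempotentElem (a • t + b • e)) (hx0 : a • t + b • e ≠ 0) :
    (a = 1 ∧ b = 0) ∨ (a = -(1 / 2) ∧ 4 * (b ^ 2 * c) = -3) := by
  rw [IsIdempotentElem, smul_add_smul_mul_self htt hte hee] at hx
  obtain ⟨hta, heb⟩ := hind.eq_of_pair hx
  have : b * (2 * a + 1) = 0 := by linear_combination -heb
  rcases mul_eq_zero.mp this with rfl | ha
  · have : a * (a - 1) = 0 := by linear_combination hta
    rcases mul_eq_zero.mp this with rfl | ha
    · simp at hx0
    · exact .inl ⟨by linear_combination ha, rfl⟩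
  · have ha : a = -(1 / 2) := by field_simp; linear_combination ha
    subst ha
    refine .inr ⟨rfl, ?_⟩
    field_simp at hta
    linear_combination hta

theorem eq_of_isIdempotentElem_of_mem_span_pair (htt : t * t = t) (hte : t * e = -e)
    (hee : e * e = c • t) (hind : LinearIndependent F ![t, e]) (h2 : (2 : F) ≠ 0) (hc : c ≠ 0)
    {μ : F} (hμ : 4 * (μ ^ 2 * c) = -3) {x : A} (hx : x ∈ Submodule.span F {t, e})
    (hxx : IsIdempotentElem x) (hx0 : x ≠ 0) :
    x = t ∨ x = (-(1 / 2 : F)) • t + μ • e ∨ x = (-(1 / 2 : F)) • t - μ • e := by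
  obtain ⟨a, b, rfl⟩ := Submodule.mem_span_pair.mp hx
  rcases coeffs_of_isIdempotentElem_smul_add_smul htt hte hee hind h2 hxx hx0 with
    ⟨rfl, rfl⟩ | ⟨rfl, hb⟩
  · simp
  · have h4c : (4 : F) * c ≠ 0 :=
      mul_ne_zero (by rw [show (4 : F) = 2 * 2 by norm_num]; exact mul_ne_zero h2 h2) hc
    have : b ^ 2 = μ ^ 2 := mul_right_cancel₀ h4c (by linear_combination hb - hμ)
    rcases sq_eq_sq_iff_eq_or_eq_neg.mp this with rfl | rfl
    · simp
    · simp [sub_eq_add_neg]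

end SmallIdempotents

theorem LinearMap.map_eq_neg_half_smul_sub_of_fix_of_neg {F M : Type*} [Field F] [AddCommGroup M]
    [Module F M] (τ : M →ₗ[F] M) (h2 : (2 : F) ≠ 0) {t e : M} {c μ : F}
    (hμ : 4 * (μ ^ 2 * c) = -3)
    (hfix : τ ((-(1 / 2 : F)) • t + μ • e) = (-(1 / 2 : F)) • t + μ • e)
    (hneg : τ ((2 * μ * c) • t - e) = -((2 * μ * c) • t - e)) :
    τ t = (-(1 / 2 : F)) • t - μ • e := by
  have ht : t = (-(1 / 2 : F)) • ((-(1 / 2 : F)) • t + μ • e) +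
      (-(μ / 2)) • ((2 * μ * c) • t - e) := by
    match_scalars
    · field_simp
      linear_combination hμ
    · field_simp
      ring
  rw [ht, map_add, map_smul, map_smul, hfix, hneg]
  match_scalars
  · field_simp
    linear_combination hμ
  · field_simp
    ring

theorem sngl_ne_zero {ι : Type*} [DecidableEq ι] (i : ι) : sngl i ≠ 0 :=
  fun h => by simpa [sngl] using congrFun h i

theorem sngl_ne_one {ι : Type*} [DecidableEq ι] [Nontrivial ι] (i : ι) : sngl i ≠ 1 := by
  obtain ⟨j, hj⟩ := exists_ne i
  exact fun h => by simpa [sngl, hj] using congrFun h j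

namespace CodeAlgebra

variable {F : Type*} [Field F] {ι : Type*} [Fintype ι] [DecidableEq ι]
  {C : Submodule (ZMod 2) (ι → ZMod 2)} {A : Type*} [NonUnitalNonAssocCommRing A] [Module F A]
  (CA : CodeAlgebra F ι C A)

theorem linearIndependent_t_e (i : ι) {α : ι → ZMod 2} (hα : α ∈ C) (h0 : α ≠ 0)
    (h1 : α ≠ 1) : LinearIndependent F ![CA.t i, CA.e α] := by
  have := CA.indep.comp ![Sum.inl i, Sum.inr ⟨α, hα, h0, h1⟩]
    (by intro x y; fin_cases x <;> fin_cases y <;> simp)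
  convert this using 1
  ext j
  fin_cases j <;> rfl

variable [Nontrivial ι] {i : ι}

theorem t_mul_e_sngl (hi : sngl i ∈ C) :
    CA.t i * CA.e (sngl i) = CA.pa i (sngl i) • CA.e (sngl i) := by
  rw [CA.mul_te i _ hi (sngl_ne_zero i) (sngl_ne_one i), if_pos (by simp [sngl])]

theorem e_sngl_mul_self (hi : sngl i ∈ C) :
    CA.e (sngl i) * CA.e (sngl i) = CA.pc i (sngl i) • CA.t i := by
  have hsupp : Finset.univ.filter (fun j => sngl i j = 1) = {i} := by
    ext j
    simp [sngl]
  rw [CA.mul_ee_self _ hi (sngl_ne_zero i) (sngl_ne_one i), hsupp, Finset.sum_singleton]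

end CodeAlgebra

theorem small_idempotents_F2_squared_general
    (F : Type*) [Field F] (h2 : (2 : F) ≠ 0)
    (A : Type*) [NonUnitalNonAssocCommRing A] [Module F A]
    [SMulCommClass F A A] [IsScalarTower F A A]
    (CA : CodeAlgebra F (Fin 2) (⊤ : Submodule (ZMod 2) (Fin 2 → ZMod 2)) A)
    (ha : ∀ i : Fin 2, CA.pa i (sngl i) = -1)
    (c μ : Fin 2 → F)
    (hc : ∀ i, ∀ j, sngl i j = 1 → CA.pc j (sngl i) = c i)
    (hc0 : ∀ i, c i ≠ 0)
    (hμ : ∀ i, (μ i) ^ 2 = -3 / (4 * c i)) :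
    ∀ i : Fin 2,
      (CA.t i ≠ 0 ∧ CA.t i * CA.t i = CA.t i ∧
        CA.t i ∈ Submodule.span F ({CA.t i, CA.e (sngl i)} : Set A)) ∧
      ((-(1/2 : F)) • CA.t i + μ i • CA.e (sngl i) ≠ 0 ∧
        ((-(1/2 : F)) • CA.t i + μ i • CA.e (sngl i)) *
          ((-(1/2 : F)) • CA.t i + μ i • CA.e (sngl i)) =
          (-(1/2 : F)) • CA.t i + μ i • CA.e (sngl i) ∧
        (-(1/2 : F)) • CA.t i + μ i • CA.e (sngl i) ∈
          Submodule.span F ({CA.t i, CA.e (sngl i)} : Set A)) ∧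
      ((-(1/2 : F)) • CA.t i - μ i • CA.e (sngl i) ≠ 0 ∧
        ((-(1/2 : F)) • CA.t i - μ i • CA.e (sngl i)) *
          ((-(1/2 : F)) • CA.t i - μ i • CA.e (sngl i)) =
          (-(1/2 : F)) • CA.t i - μ i • CA.e (sngl i) ∧
        (-(1/2 : F)) • CA.t i - μ i • CA.e (sngl i) ∈
          Submodule.span F ({CA.t i, CA.e (sngl i)} : Set A)) ∧
      (∀ x ∈ Submodule.span F ({CA.t i, CA.e (sngl i)} : Set A),
        x * x = x → x ≠ 0 →
        x = CA.t i ∨ x = (-(1/2 : F)) • CA.t i + μ i • CA.e (sngl i) ∨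
          x = (-(1/2 : F)) • CA.t i - μ i • CA.e (sngl i)) ∧
      (∀ τ : A →ₗ[F] A,
        τ ((-(1/2 : F)) • CA.t i + μ i • CA.e (sngl i)) =
          (-(1/2 : F)) • CA.t i + μ i • CA.e (sngl i) →
        τ ((2 * μ i * c i) • CA.t i - CA.e (sngl i)) =
          -((2 * μ i * c i) • CA.t i - CA.e (sngl i)) →
        τ (CA.t i) = (-(1/2 : F)) • CA.t i - μ i • CA.e (sngl i)) ∧
      (∀ τ : A →ₗ[F] A,
        τ ((-(1/2 : F)) • CA.t i - μ i • CA.e (sngl i)) =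
          (-(1/2 : F)) • CA.t i - μ i • CA.e (sngl i) →
        τ ((2 * (-μ i) * c i) • CA.t i - CA.e (sngl i)) =
          -((2 * (-μ i) * c i) • CA.t i - CA.e (sngl i)) →
        τ (CA.t i) = (-(1/2 : F)) • CA.t i + μ i • CA.e (sngl i)) := by
  intro i
  have hi : sngl i ∈ (⊤ : Submodule (ZMod 2) (Fin 2 → ZMod 2)) := trivial
  have hind := CA.linearIndependent_t_e i hi (sngl_ne_zero i) (sngl_ne_one i)
  have htt : CA.t i * CA.t i = CA.t i := by rw [CA.mul_tt, if_pos rfl]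
  have hte : CA.t i * CA.e (sngl i) = -CA.e (sngl i) := by
    rw [CA.t_mul_e_sngl hi, ha, neg_one_smul]
  have hee : CA.e (sngl i) * CA.e (sngl i) = c i • CA.t i := by
    rw [CA.e_sngl_mul_self hi, hc i i (by simp [sngl])]
  have hμ4 : 4 * (μ i ^ 2 * c i) = -3 := by
    have h4 : (4 : F) ≠ 0 := by rw [show (4 : F) = 2 * 2 by norm_num]; exact mul_ne_zero h2 h2
    rw [hμ i]
    field_simp [hc0 i]
  have hμ4_neg : 4 * ((-μ i) ^ 2 * c i) = -3 := by rwa [neg_sq]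
  have hne (b : F) : (-(1 / 2 : F)) • CA.t i + b • CA.e (sngl i) ≠ 0 := fun h =>
    h2 (by simpa using (hind.eq_zero_of_pair h).1)
  have hmem (a b : F) :
      a • CA.t i + b • CA.e (sngl i) ∈ Submodule.span F {CA.t i, CA.e (sngl i)} :=
    Submodule.mem_span_pair.mpr ⟨a, b, rfl⟩
  have hsub : (-(1/2 : F)) • CA.t i - μ i • CA.e (sngl i) =
      (-(1/2 : F)) • CA.t i + (-μ i) • CA.e (sngl i) := by
    rw [sub_eq_add_neg, ← neg_smul]
  refine ⟨⟨hind.ne_zero 0, htt, Submodule.subset_span (by simp)⟩,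
    ⟨hne _, isIdempotentElem_neg_half_smul_add_smul htt hte hee h2 hμ4, hmem _ _⟩,
    hsub ▸ ⟨hne _, isIdempotentElem_neg_half_smul_add_smul htt hte hee h2 hμ4_neg, hmem _ _⟩,
    fun x hx => eq_of_isIdempotentElem_of_mem_span_pair htt hte hee hind h2 (hc0 i) hμ4 hx,
    fun τ => τ.map_eq_neg_half_smul_sub_of_fix_of_neg h2 hμ4, fun τ hfix hneg => ?_⟩
  have := τ.map_eq_neg_half_smul_sub_of_fix_of_neg h2 hμ4_neg (hsub ▸ hfix) hneg
  rwa [neg_smul (μ i), sub_neg_eq_add] at this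

/-- In the code algebra for `C = F₂²` with `a = −1` (so `λ = −1/2`) and
`μᵢ² = −3/(4c_{αᵢ})`, each subalgebra `Aᵢ = ⟨tᵢ, e^{αᵢ}⟩` contains exactly three
nonzero idempotents, namely `tᵢ` and `e_{i,±} = −(1/2)tᵢ ± μᵢ e^{αᵢ}`, and the
Miyamoto involution `τ_{i,±}` (fixing `e_{i,±}`, negating `2μᵢc_{αᵢ}tᵢ − e^{αᵢ}`)
maps `tᵢ` to `e_{i,∓}`. -/
theorem small_idempotents_F2_squared
    (F : Type*) [Field F] (h2 : (2 : F) ≠ 0) (h3 : (3 : F) ≠ 0)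
    (A : Type*) [NonUnitalNonAssocCommRing A] [Module F A]
    [SMulCommClass F A A] [IsScalarTower F A A]
    (CA : CodeAlgebra F (Fin 2) (⊤ : Submodule (ZMod 2) (Fin 2 → ZMod 2)) A)
    (ha : ∀ i : Fin 2, CA.pa i (sngl i) = -1)
    (c μ : Fin 2 → F)
    (hc : ∀ i, ∀ j, sngl i j = 1 → CA.pc j (sngl i) = c i)
    (hc0 : ∀ i, c i ≠ 0)
    (hμ : ∀ i, (μ i) ^ 2 = -3 / (4 * c i)) :
    ∀ i : Fin 2,
      (CA.t i ≠ 0 ∧ CA.t i * CA.t i = CA.t i ∧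
        CA.t i ∈ Submodule.span F ({CA.t i, CA.e (sngl i)} : Set A)) ∧
      ((-(1/2 : F)) • CA.t i + μ i • CA.e (sngl i) ≠ 0 ∧
        ((-(1/2 : F)) • CA.t i + μ i • CA.e (sngl i)) *
          ((-(1/2 : F)) • CA.t i + μ i • CA.e (sngl i)) =
          (-(1/2 : F)) • CA.t i + μ i • CA.e (sngl i) ∧
        (-(1/2 : F)) • CA.t i + μ i • CA.e (sngl i) ∈
          Submodule.span F ({CA.t i, CA.e (sngl i)} : Set A)) ∧
      ((-(1/2 : F)) • CA.t i - μ i • CA.e (sngl i) ≠ 0 ∧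
        ((-(1/2 : F)) • CA.t i - μ i • CA.e (sngl i)) *
          ((-(1/2 : F)) • CA.t i - μ i • CA.e (sngl i)) =
          (-(1/2 : F)) • CA.t i - μ i • CA.e (sngl i) ∧
        (-(1/2 : F)) • CA.t i - μ i • CA.e (sngl i) ∈
          Submodule.span F ({CA.t i, CA.e (sngl i)} : Set A)) ∧
      (∀ x ∈ Submodule.span F ({CA.t i, CA.e (sngl i)} : Set A),
        x * x = x → x ≠ 0 →
        x = CA.t i ∨ x = (-(1/2 : F)) • CA.t i + μ i • CA.e (sngl i) ∨
          x = (-(1/2 : F)) • CA.t i - μ i • CA.e (sngl i)) ∧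
      (∀ τ : A →ₗ[F] A,
        τ ((-(1/2 : F)) • CA.t i + μ i • CA.e (sngl i)) =
          (-(1/2 : F)) • CA.t i + μ i • CA.e (sngl i) →
        τ ((2 * μ i * c i) • CA.t i - CA.e (sngl i)) =
          -((2 * μ i * c i) • CA.t i - CA.e (sngl i)) →
        τ (CA.t i) = (-(1/2 : F)) • CA.t i - μ i • CA.e (sngl i)) ∧
      (∀ τ : A →ₗ[F] A,
        τ ((-(1/2 : F)) • CA.t i - μ i • CA.e (sngl i)) =
          (-(1/2 : F)) • CA.t i - μ i • CA.e (sngl i) →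
        τ ((2 * (-μ i) * c i) • CA.t i - CA.e (sngl i)) =
          -((2 * (-μ i) * c i) • CA.t i - CA.e (sngl i)) →
        τ (CA.t i) = (-(1/2 : F)) • CA.t i + μ i • CA.e (sngl i)) :=
  small_idempotents_F2_squared_general F h2 A CA ha c μ hc hc0 hμ
end

section
/- Let C = ⊕ᵢ₌₁ʳ Cᵢ with each Cᵢ the even-weight code of length m ≥ 3, n = rm ≥ 5. For each weight-2 codeword α with supp(α) = {i, j}, let σ_α be the linear map on the code algebra basis given by: tᵢ ↔ tⱼ, t_k ↦ t_k for k ∉ supp(α), e^β ↦ e^β if |α ∩ β| = 0 or 2, and e^β ↦ e^{α+β} if |α ∩ β| = 1. Then the group generated by all such σ_α (α ranging over weight-2 codewords of C) is isomorphic to the direct product of r copies of S_m. -/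
/-- The direct sum of `r` copies of the full even-weight code of length `m`. -/
def evenSumCode (r m : ℕ) : Submodule (ZMod 2) (Fin r × Fin m → ZMod 2) where
  carrier := {v | ∀ i, ∑ j, v (i, j) = 0}
  add_mem' := by
    intro a b ha hb i
    simp [Finset.sum_add_distrib, ha i, hb i]
  zero_mem' := by intro i; simp
  smul_mem' := by
    intro cc x hx i
    simp only [Pi.smul_apply, smul_eq_mul, ← Finset.mul_sum, hx i, mul_zero]

/-- The weight-two vector supported at `(i,j)` and `(i,k)` (for `j ≠ k`). -/
def pairVec {r m : ℕ} (i : Fin r) (j k : Fin m) : Fin r × Fin m → ZMod 2 :=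
  fun p => if p = (i, j) ∨ p = (i, k) then 1 else 0

/-!
Each generator `σ_α` permutes the basis `{t p} ∪ {e^β}` exactly as the transposition `τ_α` of the
two coordinates in `supp α` does: `t p ↦ t (τ_α p)` and `e^β ↦ e^{β ∘ τ_α}`, because `β ∘ τ_α` is
`α + β` when `|α ∩ β| = 1` and `β` otherwise. So the pairs `(σ_α, τ_α)` generate a subgroup of
`GL(A) × ∏ S_m` inside the graph of "permuting the basis along a coordinate permutation". On that
graph each coordinate determines the other (the `t p` are distinct, and the basis spans `A`), so
both projections are injective; the second is onto because transpositions generate `S_m`.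
-/

open Finset Equiv

def Equiv.Perm.prodCongrRightHom (ι κ : Type*) : (ι → Perm κ) →* Perm (ι × κ) where
  toFun := prodCongrRight
  map_one' := rfl
  map_mul' _ _ := rfl

@[simp]
theorem Equiv.Perm.prodCongrRightHom_apply {ι κ : Type*} (π : ι → Perm κ) :
    Perm.prodCongrRightHom ι κ π = prodCongrRight π :=
  rfl

theorem Equiv.Perm.prodCongrRightHom_injective (ι κ : Type*) :
    Function.Injective (Perm.prodCongrRightHom ι κ) := by
  intro π π' h
  funext i
  ext j
  exact congrArg Prod.snd (Equiv.ext_iff.1 h (i, j))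

theorem Equiv.Perm.prodCongrRightHom_mulSingle_swap {ι κ : Type*} [DecidableEq ι] [DecidableEq κ]
    (i : ι) (j k : κ) :
    Perm.prodCongrRightHom ι κ (Pi.mulSingle i (swap j k)) = swap (i, j) (i, k) := by
  ext ⟨i', j'⟩ : 1
  by_cases h : i' = i
  · subst h
    simp only [prodCongrRightHom_apply, prodCongrRight_apply, Pi.mulSingle_eq_same]
    by_cases hj : j' = j
    · subst hj; simp
    by_cases hk : j' = k
    · subst hk; simp
    rw [swap_apply_of_ne_of_ne hj hk, swap_apply_of_ne_of_ne (by simpa) (by simpa)]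
  · rw [prodCongrRightHom_apply, prodCongrRight_apply, Pi.mulSingle_eq_of_ne h,
      swap_apply_of_ne_of_ne (by simp [h]) (by simp [h])]
    rfl

noncomputable def Subgroup.mapFstEquivMapSnd {G H : Type*} [Group G] [Group H]
    (K : Subgroup (G × H)) (h₁ : ∀ x ∈ K, x.1 = 1 → x.2 = 1) (h₂ : ∀ x ∈ K, x.2 = 1 → x.1 = 1) :
    K.map (MonoidHom.fst G H) ≃* K.map (MonoidHom.snd G H) :=
  have hfst : Function.Injective ((MonoidHom.fst G H).comp K.subtype) :=
    (injective_iff_map_eq_one _).2 fun x hx => Subtype.ext (Prod.ext hx (h₁ x x.2 hx))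
  have hsnd : Function.Injective ((MonoidHom.snd G H).comp K.subtype) :=
    (injective_iff_map_eq_one _).2 fun x hx => Subtype.ext (Prod.ext (h₂ x x.2 hx) hx)
  (MulEquiv.subgroupCongr (by rw [MonoidHom.range_comp, Subgroup.range_subtype])).trans <|
    ((MonoidHom.ofInjective hfst).symm.trans (MonoidHom.ofInjective hsnd)).trans <|
      MulEquiv.subgroupCongr (by rw [MonoidHom.range_comp, Subgroup.range_subtype])

def codeStar {ι : Type*} (C : Submodule (ZMod 2) (ι → ZMod 2)) : Set (ι → ZMod 2) :=
  {β | β ∈ C ∧ β ≠ 0 ∧ β ≠ 1}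

theorem comp_perm_mem_codeStar {ι : Type*} {C : Submodule (ZMod 2) (ι → ZMod 2)} {β : ι → ZMod 2}
    (hβ : β ∈ codeStar C) (π : Perm ι) (hC : β ∘ π ∈ C) : β ∘ π ∈ codeStar C := by
  have hinj : Function.Injective fun v : ι → ZMod 2 => v ∘ π := π.surjective.injective_comp_right
  exact ⟨hC, fun h => hβ.2.1 (hinj h), fun h => hβ.2.2 (hinj h)⟩

namespace CodeAlgebra

variable {F : Type*} [Field F] {ι : Type*} [Fintype ι] [DecidableEq ι]
  {C : Submodule (ZMod 2) (ι → ZMod 2)} {A : Type*} [NonUnitalNonAssocCommRing A] [Module F A]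
  (CA : CodeAlgebra F ι C A) {P : Type*} [Group P] (ρ : P →* Perm ι)
  (hC : ∀ g β, β ∈ C → β ∘ ρ g ∈ C)

def permGraph : Subgroup ((A ≃ₗ[F] A) × P) where
  carrier := {x | (∀ p, x.1 (CA.t p) = CA.t (ρ x.2 p)) ∧
    ∀ β ∈ codeStar C, x.1 (CA.e β) = CA.e (β ∘ ρ x.2⁻¹)}
  one_mem' := ⟨fun _ => by simp, fun _ _ => by simp⟩
  mul_mem' := by
    rintro x y ⟨hxt, hxe⟩ ⟨hyt, hye⟩
    refine ⟨fun p => ?_, fun β hβ => ?_⟩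
    · rw [Prod.fst_mul, LinearEquiv.mul_apply, hyt, hxt, Prod.snd_mul, map_mul, Perm.mul_apply]
    · rw [Prod.fst_mul, LinearEquiv.mul_apply, hye β hβ,
        hxe _ (comp_perm_mem_codeStar hβ _ (hC y.2⁻¹ β hβ.1)), Prod.snd_mul, mul_inv_rev, map_mul,
        Perm.coe_mul, Function.comp_assoc]
  inv_mem' := by
    rintro x ⟨hxt, hxe⟩
    refine ⟨fun p => ?_, fun β hβ => ?_⟩
    · rw [Prod.fst_inv, LinearEquiv.coe_inv, LinearEquiv.symm_apply_eq, hxt, Prod.snd_inv,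
        ← Perm.mul_apply, ← map_mul, mul_inv_cancel, map_one, Perm.one_apply]
    · rw [Prod.fst_inv, Prod.snd_inv, inv_inv, LinearEquiv.coe_inv, LinearEquiv.symm_apply_eq,
        hxe _ (comp_perm_mem_codeStar hβ _ (hC x.2 β hβ.1)),
        Function.comp_assoc, ← Perm.coe_mul, ← map_mul, mul_inv_cancel, map_one, Perm.coe_one,
        Function.comp_id]

theorem t_injective : Function.Injective CA.t :=
  (CA.indep.comp Sum.inl Sum.inl_injective).injective

variable {CA ρ hC} {x : (A ≃ₗ[F] A) × P}

theorem snd_eq_one_of_mem_permGraph (hρ : Function.Injective ρ) (hx : x ∈ CA.permGraph ρ hC)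
    (h1 : x.1 = 1) : x.2 = 1 := by
  refine hρ (Equiv.ext fun p => (CA.t_injective ?_).symm)
  simpa [h1] using hx.1 p

theorem fst_eq_one_of_mem_permGraph (hx : x ∈ CA.permGraph ρ hC) (h2 : x.2 = 1) : x.1 = 1 := by
  refine LinearEquiv.toLinearMap_injective (LinearMap.ext_on CA.span_top ?_)
  rintro _ (⟨p, rfl⟩ | ⟨β, hβ, rfl⟩)
  · simpa [h2] using hx.1 p
  · simpa [h2] using hx.2 β hβ

end CodeAlgebra

theorem Subgroup.closure_iUnion_image_mulSingle_eq_top {η : Type*} {f : η → Type*}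
    [∀ i, Group (f i)] [Finite η] [DecidableEq η] (s : ∀ i, Set (f i))
    (hs : ∀ i, Subgroup.closure (s i) = ⊤) :
    Subgroup.closure (⋃ i, Pi.mulSingle i '' s i) = ⊤ := by
  refine eq_top_iff.2 fun x _ => Subgroup.pi_mem_of_mulSingle_mem x fun i => ?_
  have hle : Subgroup.closure (s i) ≤
      (Subgroup.closure (⋃ i, Pi.mulSingle i '' s i)).comap (MonoidHom.mulSingle f i) :=
    (Subgroup.closure_le _).2 fun y hy => Subgroup.subset_closure (Set.mem_iUnion.2 ⟨i, y, hy, rfl⟩)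
  exact hle (hs i ▸ Subgroup.mem_top (x i))

theorem comp_swap_eq_self {ι M : Type*} [DecidableEq ι] {β : ι → M} {a b : ι} (h : β a = β b) :
    β ∘ swap a b = β := by
  funext p
  rw [Function.comp_apply, swap_apply_def]
  split_ifs with ha hb
  · rw [ha, h]
  · rw [hb, h]
  · rfl

section pairVec

variable {r m : ℕ} {i : Fin r} {j k : Fin m}

theorem pairVec_eq_one_iff {p : Fin r × Fin m} : pairVec i j k p = 1 ↔ p = (i, j) ∨ p = (i, k) := by
  unfold pairVec
  split_ifs with h <;> simp [h]

theorem card_pairVec_inter_eq_one_iff (hjk : j ≠ k) (β : Fin r × Fin m → ZMod 2) :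
    (univ.filter fun p => pairVec i j k p = 1 ∧ β p = 1).card = 1 ↔ β (i, j) ≠ β (i, k) := by
  have hfilter : (univ.filter fun p => pairVec i j k p = 1 ∧ β p = 1) =
      ({(i, j), (i, k)} : Finset (Fin r × Fin m)).filter (β · = 1) := by
    ext p
    simp [pairVec_eq_one_iff]
  have hne : ((i, j) : Fin r × Fin m) ≠ (i, k) := by simp [hjk]
  have h01 : ∀ x : ZMod 2, x = 0 ∨ x = 1 := by decide
  rw [hfilter, filter_insert, filter_singleton]
  rcases h01 (β (i, j)) with h | h <;> rcases h01 (β (i, k)) with h' | h' <;> simp [h, h', hne]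

theorem comp_swap_eq_pairVec_add (hjk : j ≠ k) {β : Fin r × Fin m → ZMod 2}
    (h : β (i, j) ≠ β (i, k)) : β ∘ swap (i, j) (i, k) = pairVec i j k + β := by
  have hflip : ∀ x y : ZMod 2, x ≠ y → y = 1 + x := by decide
  have hne : ((i, j) : Fin r × Fin m) ≠ (i, k) := by simp [hjk]
  funext p
  rw [Function.comp_apply, swap_apply_def, Pi.add_apply]
  split_ifs with hj hk
  · rw [hj, (pairVec_eq_one_iff.2 (Or.inl rfl)), hflip _ _ h]
  · rw [hk, (pairVec_eq_one_iff.2 (Or.inr rfl)), hflip _ _ h.symm]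
  · unfold pairVec
    rw [if_neg (by tauto), zero_add]

end pairVec

theorem comp_prodCongrRightHom_mem_evenSumCode {r m : ℕ} (π : Fin r → Perm (Fin m))
    (β : Fin r × Fin m → ZMod 2) (hβ : β ∈ evenSumCode r m) :
    β ∘ Perm.prodCongrRightHom _ _ π ∈ evenSumCode r m :=
  fun i => (Equiv.sum_comp (π i) fun j => β (i, j)).trans (hβ i)

theorem CodeAlgebra.mk_swap_mem_permGraph {F : Type*} [Field F] {A : Type*}
    [NonUnitalNonAssocCommRing A] [Module F A] {r m : ℕ}
    (CA : CodeAlgebra F (Fin r × Fin m) (evenSumCode r m) A) (g : A ≃ₗ[F] A) {i : Fin r}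
    {j k : Fin m} (hjk : j ≠ k)
    (ht_swap : g (CA.t (i, j)) = CA.t (i, k) ∧ g (CA.t (i, k)) = CA.t (i, j))
    (ht_fix : ∀ p, p ≠ (i, j) → p ≠ (i, k) → g (CA.t p) = CA.t p)
    (he_move : ∀ β, β ∈ evenSumCode r m → β ≠ 0 → β ≠ 1 →
      (univ.filter fun p => pairVec i j k p = 1 ∧ β p = 1).card = 1 →
      g (CA.e β) = CA.e (pairVec i j k + β))
    (he_fix : ∀ β, β ∈ evenSumCode r m → β ≠ 0 → β ≠ 1 →
      (univ.filter fun p => pairVec i j k p = 1 ∧ β p = 1).card ≠ 1 → g (CA.e β) = CA.e β) :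
    (g, Pi.mulSingle i (swap j k)) ∈
      CA.permGraph (Perm.prodCongrRightHom _ _) comp_prodCongrRightHom_mem_evenSumCode := by
  refine ⟨fun p => ?_, fun β ⟨hβ, h0, h1⟩ => ?_⟩
  · show g (CA.t p) = CA.t (Perm.prodCongrRightHom _ _ (Pi.mulSingle i (swap j k)) p)
    rw [Perm.prodCongrRightHom_mulSingle_swap, swap_apply_def]
    split_ifs with hj hk
    · rw [hj, ht_swap.1]
    · rw [hk, ht_swap.2]
    · exact ht_fix p hj hk
  · show g (CA.e β) = CA.e (β ∘ Perm.prodCongrRightHom _ _ (Pi.mulSingle i (swap j k))⁻¹)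
    rw [map_inv, Perm.prodCongrRightHom_mulSingle_swap, swap_inv]
    by_cases h : β (i, j) = β (i, k)
    · rw [comp_swap_eq_self h]
      exact he_fix β hβ h0 h1 ((card_pairVec_inter_eq_one_iff hjk β).not.2 (not_not.2 h))
    · rw [comp_swap_eq_pairVec_add hjk h]
      exact he_move β hβ h0 h1 ((card_pairVec_inter_eq_one_iff hjk β).2 h)

open Finset in
theorem miyamoto_extra_automorphisms_Sm_general
    (F : Type*) [Field F]
    (A : Type*) [NonUnitalNonAssocCommRing A] [Module F A]
    (r m : ℕ)
    (CA : CodeAlgebra F (Fin r × Fin m) (evenSumCode r m) A)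
    (σ : Fin r → Fin m → Fin m → (A ≃ₗ[F] A))
    (hσt_swap : ∀ i j k, j ≠ k →
      σ i j k (CA.t (i, j)) = CA.t (i, k) ∧ σ i j k (CA.t (i, k)) = CA.t (i, j))
    (hσt_fix : ∀ i j k, j ≠ k → ∀ p : Fin r × Fin m, p ≠ (i, j) → p ≠ (i, k) →
      σ i j k (CA.t p) = CA.t p)
    (hσe_move : ∀ i j k, j ≠ k → ∀ β, β ∈ evenSumCode r m → β ≠ 0 → β ≠ 1 →
      (univ.filter fun p => pairVec i j k p = 1 ∧ β p = 1).card = 1 →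
      σ i j k (CA.e β) = CA.e (pairVec i j k + β))
    (hσe_fix : ∀ i j k, j ≠ k → ∀ β, β ∈ evenSumCode r m → β ≠ 0 → β ≠ 1 →
      (univ.filter fun p => pairVec i j k p = 1 ∧ β p = 1).card ≠ 1 →
      σ i j k (CA.e β) = CA.e β) :
    Nonempty
      (↥(Subgroup.closure {g : A ≃ₗ[F] A | ∃ i j k, j ≠ k ∧ g = σ i j k}) ≃*
        (Fin r → Equiv.Perm (Fin m))) := by
  set S : Set ((A ≃ₗ[F] A) × (Fin r → Perm (Fin m))) :=
    {x | ∃ i j k, j ≠ k ∧ x = (σ i j k, Pi.mulSingle i (swap j k))}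
  have hS : Subgroup.closure S ≤
      CA.permGraph (Perm.prodCongrRightHom _ _) comp_prodCongrRightHom_mem_evenSumCode := by
    refine (Subgroup.closure_le _).2 ?_
    rintro _ ⟨i, j, k, hjk, rfl⟩
    exact CA.mk_swap_mem_permGraph _ hjk (hσt_swap i j k hjk) (hσt_fix i j k hjk)
      (hσe_move i j k hjk) (hσe_fix i j k hjk)
  have hfst : (Subgroup.closure S).map (MonoidHom.fst _ _) =
      Subgroup.closure {g : A ≃ₗ[F] A | ∃ i j k, j ≠ k ∧ g = σ i j k} := by
    rw [MonoidHom.map_closure]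
    congr 1
    ext g
    simp [S, eq_comm]
  have hsnd : (Subgroup.closure S).map (MonoidHom.snd _ _) = ⊤ := by
    rw [MonoidHom.map_closure, ← Subgroup.closure_iUnion_image_mulSingle_eq_top
      (fun _ => {s : Perm (Fin m) | s.IsSwap}) fun _ => Perm.closure_isSwap]
    congr 1
    ext π
    simp [S, Perm.IsSwap, eq_comm]
  exact ⟨(MulEquiv.subgroupCongr hfst.symm).trans <|
    ((Subgroup.closure S).mapFstEquivMapSnd
      (fun x hx => CodeAlgebra.snd_eq_one_of_mem_permGraph
        (Perm.prodCongrRightHom_injective _ _) (hS hx))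
      fun x hx => CodeAlgebra.fst_eq_one_of_mem_permGraph (hS hx)).trans <|
    (MulEquiv.subgroupCongr hsnd).trans Subgroup.topEquiv⟩

open Finset in
/-- For `C = ⊕ᵢ₌₁ʳ Cᵢ` a direct sum of even-weight codes of length `m ≥ 3` with
`n = rm ≥ 5`, the automorphisms `σ_α` of the code algebra attached to the weight-2
codewords `α` (swapping the two toral elements in `supp(α)` and mapping
`e^β ↦ e^{α+β}` when `|α ∩ β| = 1`, fixing everything else) generate a group
isomorphic to the direct product of `r` copies of `S_m`. -/
theorem miyamoto_extra_automorphisms_Sm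
    (F : Type*) [Field F] (h2 : (2 : F) ≠ 0)
    (A : Type*) [NonUnitalNonAssocCommRing A] [Module F A]
    [SMulCommClass F A A] [IsScalarTower F A A]
    (r m : ℕ) (hm : 3 ≤ m) (hn : 5 ≤ r * m)
    (CA : CodeAlgebra F (Fin r × Fin m) (evenSumCode r m) A)
    (σ : Fin r → Fin m → Fin m → (A ≃ₗ[F] A))
    (hσt_swap : ∀ i j k, j ≠ k →
      σ i j k (CA.t (i, j)) = CA.t (i, k) ∧ σ i j k (CA.t (i, k)) = CA.t (i, j))
    (hσt_fix : ∀ i j k, j ≠ k → ∀ p : Fin r × Fin m, p ≠ (i, j) → p ≠ (i, k) →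
      σ i j k (CA.t p) = CA.t p)
    (hσe_move : ∀ i j k, j ≠ k → ∀ β, β ∈ evenSumCode r m → β ≠ 0 → β ≠ 1 →
      (univ.filter fun p => pairVec i j k p = 1 ∧ β p = 1).card = 1 →
      σ i j k (CA.e β) = CA.e (pairVec i j k + β))
    (hσe_fix : ∀ i j k, j ≠ k → ∀ β, β ∈ evenSumCode r m → β ≠ 0 → β ≠ 1 →
      (univ.filter fun p => pairVec i j k p = 1 ∧ β p = 1).card ≠ 1 →
      σ i j k (CA.e β) = CA.e β) :
    Nonempty
      (↥(Subgroup.closure {g : A ≃ₗ[F] A | ∃ i j k, j ≠ k ∧ g = σ i j k}) ≃*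
        (Fin r → Equiv.Perm (Fin m))) :=
  miyamoto_extra_automorphisms_Sm_general F A r m CA σ hσt_swap hσt_fix hσe_move hσe_fix
end
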